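/- For the 3–3 Pachner move (a₃ = 0): a permitted coloring of the cluster C = {23456, 13456, 12456} ⊂ ∂Δ⁵ that vanishes on all boundary tetrahedra of C (i.e. on all tetrahedra of C except the inner ones 1456, 2456, 3456) must vanish also on the inner tetrahedra; i.e., the space of permitted colorings of C with zero boundary values is zero-dimensional. -/
import Mathlib


open Finset

/-- position (0-based) of vertex `v` in the increasing order of vertices of `t`. -/
def idx (t : Finset ℕ) (v : ℕ) : ℕ := (t.filter (· < v)).card

/-- coefficient rows of the constant edge functionals on a tetrahedron,
indexed by the (0-based) positions of the two vertices of the edge. -/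
def phiRow : ℕ → ℕ → ℤ × ℤ
  | 0, 1 => (0, 1)
  | 0, 2 => (1, -1)
  | 0, 3 => (-1, 0)
  | 1, 2 => (-1, 0)
  | 1, 3 => (1, 1)
  | 2, 3 => (0, -1)
  | _, _ => (0, 0)

/-- components of the constant edge vectors on a tetrahedron,
indexed by the (0-based) positions of the two vertices of the edge. -/
def psiRow : ℕ → ℕ → ℤ × ℤ
  | 0, 1 => (1, 0)
  | 0, 2 => (-1, 1)
  | 0, 3 => (0, -1)
  | 1, 2 => (0, -1)
  | 1, 3 => (1, 1)
  | 2, 3 => (-1, 0)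
  | _, _ => (0, 0)

variable (F : Type) [Field F]

/-- the `x`-component of the color of tetrahedron `t`, as a linear functional. -/
noncomputable def evalX (t : Finset ℕ) : (Finset ℕ → F × F) →ₗ[F] F :=
  (LinearMap.fst F F F).comp (LinearMap.proj (R := F) (φ := fun _ : Finset ℕ => F × F) t)

/-- the `y`-component of the color of tetrahedron `t`, as a linear functional. -/
noncomputable def evalY (t : Finset ℕ) : (Finset ℕ → F × F) →ₗ[F] F :=
  (LinearMap.snd F F F).comp (LinearMap.proj (R := F) (φ := fun _ : Finset ℕ => F × F) t)

/-- the edge functional `φ_{jk}` of the pentachoron `u`, as a linear functional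
on colorings (the tetrahedron opposite vertex `i` contributes with sign `(-1)^(i+1)`,
`i` counted 1-based, i.e. `(-1)^(idx u i)`). -/
noncomputable def phiLin (u : Finset ℕ) (j k : ℕ) : (Finset ℕ → F × F) →ₗ[F] F :=
  ∑ i ∈ u \ {j, k},
    ((-1 : F) ^ idx u i) •
      ((((phiRow (idx (u.erase i) j) (idx (u.erase i) k)).1 : F) • evalX F (u.erase i)) +
       (((phiRow (idx (u.erase i) j) (idx (u.erase i) k)).2 : F) • evalY F (u.erase i)))

/-- a coloring is permitted on the simplex with vertex set `S` if all edge functionals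
of all pentachora (5-element subsets) of `S` annihilate it. -/
def Permitted (S : Finset ℕ) (c : Finset ℕ → F × F) : Prop :=
  ∀ u ⊆ S, u.card = 5 → ∀ j ∈ u, ∀ k ∈ u, j < k → phiLin F u j k c = 0

/-- a coloring is permitted on a cluster `P` of pentachora if all edge functionals
of all pentachora of `P` annihilate it. -/
def PermittedOn (P : Finset (Finset ℕ)) (c : Finset ℕ → F × F) : Prop :=
  ∀ u ∈ P, ∀ j ∈ u, ∀ k ∈ u, j < k → phiLin F u j k c = 0

/-- the edge vector `ψ_{jk}` (for `j < k`). -/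
def psiVec (j k : ℕ) (t : Finset ℕ) : F × F :=
  if j ∈ t ∧ k ∈ t then
    (((psiRow (idx t j) (idx t k)).1 : F), ((psiRow (idx t j) (idx t k)).2 : F))
  else 0

open Classical in
/-- the edge vector `ψ_{jk}` with support cut down to the tetrahedra in `T`. -/
noncomputable def psiC (T : Set (Finset ℕ)) (j k : ℕ) (t : Finset ℕ) : F × F :=
  if t ∈ T then psiVec F j k t else 0

/-- the submodule of permitted colorings of the simplex with vertex set `S`. -/
noncomputable def PermittedSub (S : Finset ℕ) : Submodule F (Finset ℕ → F × F) :=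
  ⨅ (u : Finset ℕ) (_ : u ⊆ S ∧ u.card = 5) (p : ℕ × ℕ)
    (_ : p.1 ∈ u ∧ p.2 ∈ u ∧ p.1 < p.2), LinearMap.ker (phiLin F u p.1 p.2)

/-- the submodule of permitted colorings of a cluster `P` of pentachora. -/
noncomputable def PermittedSubOn (P : Finset (Finset ℕ)) : Submodule F (Finset ℕ → F × F) :=
  ⨅ (u : Finset ℕ) (_ : u ∈ P) (p : ℕ × ℕ)
    (_ : p.1 ∈ u ∧ p.2 ∈ u ∧ p.1 < p.2), LinearMap.ker (phiLin F u p.1 p.2)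

/-- colorings supported on the set `T` of tetrahedra. -/
noncomputable def Supported (T : Set (Finset ℕ)) : Submodule F (Finset ℕ → F × F) :=
  ⨅ (t : Finset ℕ) (_ : t ∉ T),
    LinearMap.ker (LinearMap.proj (R := F) (φ := fun _ : Finset ℕ => F × F) t)

/-- the increasing map identifying vertices `1, …` of `Δⁿ` with the vertices of the
face of `Δ^{n+1}` omitting vertex `k`. -/
def dmap (k i : ℕ) : ℕ := if i < k then i else i + 1

/-- restriction of a coloring of `Δ^{n+1}` onto its face omitting vertex `k`,
identified order-preservingly with `Δⁿ`. -/
def restr (k : ℕ) (c : Finset ℕ → F × F) : Finset ℕ → F × F :=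
  fun t => c (t.image (dmap k))

/-- the hexagon coboundary of an `n`-cochain (a function on colorings of `Δⁿ`). -/
noncomputable def hexδ (n : ℕ) (c : (Finset ℕ → F × F) → F) :
    (Finset ℕ → F × F) → F :=
  fun y => ∑ k ∈ Finset.Icc 1 (n + 2), (-1 : F) ^ (k + 1) * c (restr F k y)

/-- the left-hand side `C = {23456, 13456, 12456}` of the 3–3 Pachner move. -/
def C33 : Finset (Finset ℕ) :=
  {(Icc 1 6).erase 1, (Icc 1 6).erase 2, (Icc 1 6).erase 3}


lemma phiLin_apply (u : Finset ℕ) (j k : ℕ) (c : Finset ℕ → F × F) :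
    phiLin F u j k c =
      ∑ i ∈ u \ {j, k},
        ((-1 : F) ^ idx u i) *
          (((phiRow (idx (u.erase i) j) (idx (u.erase i) k)).1 : F) * (c (u.erase i)).1 +
           ((phiRow (idx (u.erase i) j) (idx (u.erase i) k)).2 : F) * (c (u.erase i)).2) := by
  simp [phiLin, evalX, evalY, LinearMap.sum_apply, smul_eq_mul, mul_add]


lemma sum3 {M : Type*} [AddCommMonoid M] (a b d : ℕ) (hab : a ≠ b) (had : a ≠ d)
    (hbd : b ≠ d) (f : ℕ → M) : ∑ i ∈ ({a, b, d} : Finset ℕ), f i = f a + f b + f d := by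
  rw [Finset.sum_insert (by simp [hab, had]), Finset.sum_insert (by simp [hbd]),
    Finset.sum_singleton, add_assoc]

/-- `a₃ = 0`: a permitted coloring of `C` vanishing on all boundary
tetrahedra of `C` (all tetrahedra of `C` except the inner ones `1456, 2456, 3456`)
vanishes also on the inner tetrahedra. -/
theorem pachner_33_zero_boundary (c : Finset ℕ → F × F) (h : PermittedOn F C33 c)
    (hb : ∀ t : Finset ℕ, t.card = 4 → (∃ u ∈ C33, t ⊆ u) →
      t ∉ ({{1, 4, 5, 6}, {2, 4, 5, 6}, {3, 4, 5, 6}} : Set (Finset ℕ)) → c t = 0) :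
    c {1, 4, 5, 6} = 0 ∧ c {2, 4, 5, 6} = 0 ∧ c {3, 4, 5, 6} = 0 := by
  have b0 : c {2,3,5,6} = 0 := hb _ (by decide) ⟨(Icc 1 6).erase 1, by decide, by decide⟩ (by simp only [Set.mem_insert_iff, Set.mem_singleton_iff]; decide)
  have b1 : c {2,3,4,6} = 0 := hb _ (by decide) ⟨(Icc 1 6).erase 1, by decide, by decide⟩ (by simp only [Set.mem_insert_iff, Set.mem_singleton_iff]; decide)
  have b2 : c {2,3,4,5} = 0 := hb _ (by decide) ⟨(Icc 1 6).erase 1, by decide, by decide⟩ (by simp only [Set.mem_insert_iff, Set.mem_singleton_iff]; decide)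
  have b3 : c {1,3,5,6} = 0 := hb _ (by decide) ⟨(Icc 1 6).erase 2, by decide, by decide⟩ (by simp only [Set.mem_insert_iff, Set.mem_singleton_iff]; decide)
  have b4 : c {1,3,4,6} = 0 := hb _ (by decide) ⟨(Icc 1 6).erase 2, by decide, by decide⟩ (by simp only [Set.mem_insert_iff, Set.mem_singleton_iff]; decide)
  have b5 : c {1,3,4,5} = 0 := hb _ (by decide) ⟨(Icc 1 6).erase 2, by decide, by decide⟩ (by simp only [Set.mem_insert_iff, Set.mem_singleton_iff]; decide)
  have e0 := h ((Icc 1 6).erase 1) (by decide) 2 (by decide) 6 (by decide) (by norm_num)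
  rw [phiLin_apply, show ((Icc 1 6).erase 1 : Finset ℕ) = {2,3,4,5,6} from by decide, show ({2,3,4,5,6} \ {2,6} : Finset ℕ) = {3,4,5} from by decide, sum3 3 4 5 (by decide) (by decide) (by decide)] at e0
  simp only [show ({2,3,4,5,6} : Finset ℕ).erase 3 = {2,4,5,6} from by decide, show idx {2,3,4,5,6} 3 = 1 from by decide, show idx ({2,4,5,6} : Finset ℕ) 2 = 0 from by decide, show idx ({2,4,5,6} : Finset ℕ) 6 = 3 from by decide, show ({2,3,4,5,6} : Finset ℕ).erase 4 = {2,3,5,6} from by decide, show idx {2,3,4,5,6} 4 = 2 from by decide, show idx ({2,3,5,6} : Finset ℕ) 2 = 0 from by decide, show idx ({2,3,5,6} : Finset ℕ) 6 = 3 from by decide, b0, show ({2,3,4,5,6} : Finset ℕ).erase 5 = {2,3,4,6} from by decide, show idx {2,3,4,5,6} 5 = 3 from by decide, show idx ({2,3,4,6} : Finset ℕ) 2 = 0 from by decide, show idx ({2,3,4,6} : Finset ℕ) 6 = 3 from by decide, b1] at e0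
  norm_num [phiRow] at e0
  have e1 := h ((Icc 1 6).erase 1) (by decide) 2 (by decide) 5 (by decide) (by norm_num)
  rw [phiLin_apply, show ((Icc 1 6).erase 1 : Finset ℕ) = {2,3,4,5,6} from by decide, show ({2,3,4,5,6} \ {2,5} : Finset ℕ) = {3,4,6} from by decide, sum3 3 4 6 (by decide) (by decide) (by decide)] at e1
  simp only [show ({2,3,4,5,6} : Finset ℕ).erase 3 = {2,4,5,6} from by decide, show idx {2,3,4,5,6} 3 = 1 from by decide, show idx ({2,4,5,6} : Finset ℕ) 2 = 0 from by decide, show idx ({2,4,5,6} : Finset ℕ) 5 = 2 from by decide, show ({2,3,4,5,6} : Finset ℕ).erase 4 = {2,3,5,6} from by decide, show idx {2,3,4,5,6} 4 = 2 from by decide, show idx ({2,3,5,6} : Finset ℕ) 2 = 0 from by decide, show idx ({2,3,5,6} : Finset ℕ) 5 = 2 from by decide, b0, show ({2,3,4,5,6} : Finset ℕ).erase 6 = {2,3,4,5} from by decide, show idx {2,3,4,5,6} 6 = 4 from by decide, show idx ({2,3,4,5} : Finset ℕ) 2 = 0 from by decide, show idx ({2,3,4,5} : Finset ℕ) 5 =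 3 from by decide, b2] at e1
  norm_num [phiRow] at e1
  have e2 := h ((Icc 1 6).erase 1) (by decide) 3 (by decide) 6 (by decide) (by norm_num)
  rw [phiLin_apply, show ((Icc 1 6).erase 1 : Finset ℕ) = {2,3,4,5,6} from by decide, show ({2,3,4,5,6} \ {3,6} : Finset ℕ) = {2,4,5} from by decide, sum3 2 4 5 (by decide) (by decide) (by decide)] at e2
  simp only [show ({2,3,4,5,6} : Finset ℕ).erase 2 = {3,4,5,6} from by decide, show idx {2,3,4,5,6} 2 = 0 from by decide, show idx ({3,4,5,6} : Finset ℕ) 3 = 0 from by decide, show idx ({3,4,5,6} : Finset ℕ) 6 = 3 from by decide, show ({2,3,4,5,6} : Finset ℕ).erase 4 = {2,3,5,6} from by decide, show idx {2,3,4,5,6} 4 = 2 from by decide, show idx ({2,3,5,6} : Finset ℕ) 3 = 1 from by decide, show idx ({2,3,5,6} : Finset ℕ) 6 = 3 from by decide, b0, show ({2,3,4,5,6} : Finset ℕ).erase 5 = {2,3,4,6} from by decide, show idx {2,3,4,5,6} 5 = 3 from by decide, show idx ({2,3,4,6} : Finset ℕ) 3 = 1 from by decide, show idx ({2,3,4,6}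 : Finset ℕ) 6 = 3 from by decide, b1] at e2
  norm_num [phiRow] at e2
  have e3 := h ((Icc 1 6).erase 1) (by decide) 3 (by decide) 5 (by decide) (by norm_num)
  rw [phiLin_apply, show ((Icc 1 6).erase 1 : Finset ℕ) = {2,3,4,5,6} from by decide, show ({2,3,4,5,6} \ {3,5} : Finset ℕ) = {2,4,6} from by decide, sum3 2 4 6 (by decide) (by decide) (by decide)] at e3
  simp only [show ({2,3,4,5,6} : Finset ℕ).erase 2 = {3,4,5,6} from by decide, show idx {2,3,4,5,6} 2 = 0 from by decide, show idx ({3,4,5,6} : Finset ℕ) 3 = 0 from by decide, show idx ({3,4,5,6} : Finset ℕ) 5 = 2 from by decide, show ({2,3,4,5,6} : Finset ℕ).erase 4 = {2,3,5,6} from by decide, show idx {2,3,4,5,6} 4 = 2 from by decide, show idx ({2,3,5,6} : Finset ℕ) 3 = 1 from by decide, show idx ({2,3,5,6} : Finset ℕ) 5 = 2 from by decide, b0, show ({2,3,4,5,6} : Finset ℕ).erase 6 = {2,3,4,5} from by decide, show idx {2,3,4,5,6} 6 = 4 from by decide, show idx ({2,3,4,5} : Finset ℕ) 3 = 1 from by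 decide, show idx ({2,3,4,5} : Finset ℕ) 5 = 3 from by decide, b2] at e3
  norm_num [phiRow] at e3
  have e4 := h ((Icc 1 6).erase 2) (by decide) 1 (by decide) 6 (by decide) (by norm_num)
  rw [phiLin_apply, show ((Icc 1 6).erase 2 : Finset ℕ) = {1,3,4,5,6} from by decide, show ({1,3,4,5,6} \ {1,6} : Finset ℕ) = {3,4,5} from by decide, sum3 3 4 5 (by decide) (by decide) (by decide)] at e4
  simp only [show ({1,3,4,5,6} : Finset ℕ).erase 3 = {1,4,5,6} from by decide, show idx {1,3,4,5,6} 3 = 1 from by decide, show idx ({1,4,5,6} : Finset ℕ) 1 = 0 from by decide, show idx ({1,4,5,6} : Finset ℕ) 6 = 3 from by decide, show ({1,3,4,5,6} : Finset ℕ).erase 4 = {1,3,5,6} from by decide, show idx {1,3,4,5,6} 4 = 2 from by decide, show idx ({1,3,5,6} : Finset ℕ) 1 = 0 from by decide, show idx ({1,3,5,6} : Finset ℕ) 6 = 3 from by decide, b3, show ({1,3,4,5,6} : Finset ℕ).erase 5 = {1,3,4,6} from by decide, show idx {1,3,4,5,6} 5 = 3 from by decide, show idx ({1,3,4,6} : Finset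 ℕ) 1 = 0 from by decide, show idx ({1,3,4,6} : Finset ℕ) 6 = 3 from by decide, b4] at e4
  norm_num [phiRow] at e4
  have e5 := h ((Icc 1 6).erase 2) (by decide) 1 (by decide) 5 (by decide) (by norm_num)
  rw [phiLin_apply, show ((Icc 1 6).erase 2 : Finset ℕ) = {1,3,4,5,6} from by decide, show ({1,3,4,5,6} \ {1,5} : Finset ℕ) = {3,4,6} from by decide, sum3 3 4 6 (by decide) (by decide) (by decide)] at e5
  simp only [show ({1,3,4,5,6} : Finset ℕ).erase 3 = {1,4,5,6} from by decide, show idx {1,3,4,5,6} 3 = 1 from by decide, show idx ({1,4,5,6} : Finset ℕ) 1 = 0 from by decide, show idx ({1,4,5,6} : Finset ℕ) 5 = 2 from by decide, show ({1,3,4,5,6} : Finset ℕ).erase 4 = {1,3,5,6} from by decide, show idx {1,3,4,5,6} 4 = 2 from by decide, show idx ({1,3,5,6} : Finset ℕ) 1 = 0 from by decide, show idx ({1,3,5,6} : Finset ℕ) 5 = 2 from by decide, b3, show ({1,3,4,5,6} : Finset ℕ).erase 6 = {1,3,4,5} from by decide, show idx {1,3,4,5,6} 6 = 4 from by decide, show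 idx ({1,3,4,5} : Finset ℕ) 1 = 0 from by decide, show idx ({1,3,4,5} : Finset ℕ) 5 = 3 from by decide, b5] at e5
  norm_num [phiRow] at e5
  refine ⟨Prod.ext (by simpa using e4) (by simp only [Prod.snd_zero]; linear_combination e5 + e4),
    Prod.ext (by simpa using e0) (by simp only [Prod.snd_zero]; linear_combination e1 + e0),
    Prod.ext (by simpa using e2) (by simp only [Prod.snd_zero]; linear_combination e2 - e3)⟩
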